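/- arXiv:1805.10251 — 3 statements merged into one kernel-verified Lean document; each statement's English description precedes it below -/
import Mathlib

section
/- Define f : ℝ² → ℝ by f(x) = ‖A(xxᵀ − Z)‖², where Z = [[1,0],[0,0]] and A is as above. Then at the point x₀ = (0, 1/√2): f(x₀) = 3/2, the gradient of f vanishes at x₀, and the Hessian of f at x₀ equals [[0,0],[0,8]], which is positive semidefinite. -/
noncomputable def A1 : Matrix (Fin 2) (Fin 2) ℝ := !![Real.sqrt 2, 0; 0, 1 / Real.sqrt 2]
noncomputable def A2 : Matrix (Fin 2) (Fin 2) ℝ := !![0, Real.sqrt (3/2); Real.sqrt (3/2), 0]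
noncomputable def A3 : Matrix (Fin 2) (Fin 2) ℝ := !![0, 0; 0, Real.sqrt (3/2)]

def Zmat : Matrix (Fin 2) (Fin 2) ℝ := !![1, 0; 0, 0]

/-- Frobenius inner product -/
def frobInner (M X : Matrix (Fin 2) (Fin 2) ℝ) : ℝ := ∑ i, ∑ j, M i j * X i j

/-- outer product xxᵀ -/
def outer (x : Fin 2 → ℝ) : Matrix (Fin 2) (Fin 2) ℝ := Matrix.of fun i j => x i * x j

/-- f(x) = ‖A(xxᵀ − Z)‖² -/
noncomputable def f (x : Fin 2 → ℝ) : ℝ :=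
  (frobInner A1 (outer x - Zmat)) ^ 2 + (frobInner A2 (outer x - Zmat)) ^ 2 +
    (frobInner A3 (outer x - Zmat)) ^ 2

noncomputable def x0 : Fin 2 → ℝ := ![0, 1 / Real.sqrt 2]

/-!
With `a = x₀²` and `b = x₁²` the function is the quartic
`f x = 2(a - 1)² + 2(a - 1)b + 2b² + 6ab`, whose partial derivative in `b` vanishes at
`(a, b) = (0, 1/2)`. Along any line `t ↦ x0 + t • u` it is therefore a quartic polynomial in `t`
with vanishing linear coefficient and quadratic coefficient `4 u₁²`; the gradient and the Hessian
are read off from these two coefficients.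
-/

lemma hasDerivAt_quartic (c₀ c₁ c₂ c₃ c₄ t : ℝ) :
    HasDerivAt (fun t => c₀ + c₁ * t + c₂ * t ^ 2 + c₃ * t ^ 3 + c₄ * t ^ 4)
      (c₁ + 2 * c₂ * t + 3 * c₃ * t ^ 2 + 4 * c₄ * t ^ 3) t := by
  refine (((((hasDerivAt_id' t).const_mul c₁).const_add c₀).add
    ((hasDerivAt_pow 2 t).const_mul c₂)).add ((hasDerivAt_pow 3 t).const_mul c₃)).add
    ((hasDerivAt_pow 4 t).const_mul c₄) |>.congr_deriv ?_
  norm_num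
  ring

lemma deriv_quartic_zero (c₀ c₁ c₂ c₃ c₄ : ℝ) :
    deriv (fun t => c₀ + c₁ * t + c₂ * t ^ 2 + c₃ * t ^ 3 + c₄ * t ^ 4) 0 = c₁ := by
  simp [(hasDerivAt_quartic c₀ c₁ c₂ c₃ c₄ 0).deriv]

lemma deriv_deriv_quartic_zero (c₀ c₁ c₂ c₃ c₄ : ℝ) :
    deriv (deriv fun t => c₀ + c₁ * t + c₂ * t ^ 2 + c₃ * t ^ 3 + c₄ * t ^ 4) 0 = 2 * c₂ := by
  have h : deriv (fun t => c₀ + c₁ * t + c₂ * t ^ 2 + c₃ * t ^ 3 + c₄ * t ^ 4) =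
      fun t => c₁ + 2 * c₂ * t + 3 * c₃ * t ^ 2 + 4 * c₄ * t ^ 3 + 0 * t ^ 4 := by
    ext t
    rw [(hasDerivAt_quartic c₀ c₁ c₂ c₃ c₄ t).deriv]
    ring
  rw [h, deriv_quartic_zero]

lemma f_apply (x : Fin 2 → ℝ) :
    f x = 2 * (x 0 ^ 2 - 1) ^ 2 + 2 * (x 0 ^ 2 - 1) * x 1 ^ 2 + 2 * x 1 ^ 4
      + 6 * x 0 ^ 2 * x 1 ^ 2 := by
  simp only [f, frobInner, A1, A2, A3, Zmat, outer, ← Real.sqrt_div_self', Fin.sum_univ_two,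
    Matrix.sub_apply, Matrix.of_apply, Matrix.cons_val', Matrix.cons_val_zero,
    Matrix.cons_val_one, Matrix.empty_val', Matrix.cons_val_fin_one]
  ring_nf
  simp only [Real.sq_sqrt (zero_le_two : (0 : ℝ) ≤ 2),
    Real.sq_sqrt (by norm_num : (0 : ℝ) ≤ 3 / 2)]
  ring

lemma differentiable_f : Differentiable ℝ f := by
  rw [show f = _ from funext f_apply]
  fun_prop

lemma f_add_smul_of_sq_eq_half {c : ℝ} (hc : c ^ 2 = 1 / 2) (u : Fin 2 → ℝ) (t : ℝ) :
    f (![0, c] + t • u) = 3 / 2 + 0 * t + 4 * u 1 ^ 2 * t ^ 2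
      + 8 * c * (2 * u 0 ^ 2 * u 1 + u 1 ^ 3) * t ^ 3
      + 2 * (u 0 ^ 4 + 4 * u 0 ^ 2 * u 1 ^ 2 + u 1 ^ 4) * t ^ 4 := by
  simp only [f_apply, Pi.add_apply, Pi.smul_apply, smul_eq_mul, Matrix.cons_val_zero,
    Matrix.cons_val_one]
  linear_combination
    (8 * t ^ 2 * u 0 ^ 2 - 1 + 2 * c ^ 2 + 8 * c * t * u 1 + 12 * t ^ 2 * u 1 ^ 2) * hc

theorem stmt1 :
    f x0 = 3 / 2 ∧
    fderiv ℝ f x0 = 0 ∧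
    (∀ u : Fin 2 → ℝ,
      deriv (deriv fun t : ℝ => f (x0 + t • u)) 0 =
        ∑ i, ∑ j, u i * (!![0, 0; 0, 8] : Matrix (Fin 2) (Fin 2) ℝ) i j * u j) ∧
    (!![(0:ℝ), 0; 0, 8] : Matrix (Fin 2) (Fin 2) ℝ).PosSemidef := by
  have hc : (1 / Real.sqrt 2) ^ 2 = 1 / 2 := by
    rw [div_pow, one_pow, Real.sq_sqrt zero_le_two]
  have hline (u : Fin 2 → ℝ) := funext (f_add_smul_of_sq_eq_half hc u)
  refine ⟨by simpa [x0] using f_add_smul_of_sq_eq_half hc 0 0, ?_, fun u => ?_, ?_⟩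
  · ext v
    rw [← differentiable_f.differentiableAt.lineDeriv_eq_fderiv, lineDeriv, x0, hline,
      deriv_quartic_zero, zero_apply]
  · rw [x0, hline, deriv_deriv_quartic_zero]
    simp only [Matrix.of_apply, Matrix.cons_val', Matrix.cons_val_fin_one, Fin.sum_univ_two,
      Matrix.cons_val_zero, Matrix.cons_val_one, mul_zero, zero_mul, add_zero, zero_add]
    ring
  · rw [← Matrix.diagonal_vec2]
    exact Matrix.PosSemidef.diagonal (by simp [Pi.le_def, Fin.forall_fin_two])
end

section
/- Let M be a symmetric n×n matrix with tr(M) ≥ 0, and write M = M₊ − M₋ where M₊, M₋ are positive semidefinite with M₊M₋ = 0 (the positive and negative parts from the spectral decomposition). Then the minimum of tr(V) over all real α and positive semidefinite matrices U, V satisfying tr(U) = 1 and αM = U − V equals tr(M₋)/tr(M₊). -/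
/-!
Feasibility of `α • M = U - V` forces `α · tr M₊ ≤ 1`: multiplying the identity by the
orthogonal projection `P` onto the range of `M₊`, which fixes `M₊` and kills `M₋`, gives
`α · tr M₊ = tr (P U) - tr (P V) ≤ tr U = 1`. Taking traces of the identity gives
`tr V = 1 - α (tr M₊ - tr M₋)`, which by `tr M ≥ 0` is then at least `tr M₋ / tr M₊`;
the value is attained at `α = 1 / tr M₊`, `U = M₊ / tr M₊`, `V = M₋ / tr M₊`.
-/

open Matrix
open scoped MatrixOrder ComplexOrder

section RCLike

variable {m 𝕜 : Type*} [Fintype m] [RCLike 𝕜]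

theorem Matrix.PosSemidef.trace_mul_nonneg {A B : Matrix m m 𝕜} (hA : A.PosSemidef)
    (hB : B.PosSemidef) : 0 ≤ (A * B).trace := by
  classical
  obtain ⟨S, rfl⟩ := CStarAlgebra.nonneg_iff_eq_star_mul_self.mp hA.nonneg
  rw [star_eq_conjTranspose, mul_assoc, trace_mul_comm]
  exact (hB.mul_mul_conjTranspose_same S).trace_nonneg

variable [DecidableEq m]

theorem Matrix.IsHermitian.exists_support_projection {A : Matrix m m 𝕜} (hA : A.IsHermitian) :
    ∃ P : Matrix m m 𝕜, P.PosSemidef ∧ (1 - P).PosSemidef ∧ P * A = A ∧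
      ∀ B : Matrix m m 𝕜, A * B = 0 → P * B = 0 := by
  have hcont (f : ℝ → ℝ) : ContinuousOn f (spectrum ℝ A) := A.finite_real_spectrum.continuousOn f
  have hsa : IsSelfAdjoint A := hA
  have hmul (f g : ℝ → ℝ) : cfc (fun x => f x * g x) A = cfc f A * cfc g A :=
    cfc_mul f g A (hcont f) (hcont g)
  have hfactor : cfc (fun x : ℝ => x⁻¹ * x) A = cfc (fun x : ℝ => x⁻¹) A * A := by
    rw [hmul, cfc_id' ℝ A]
  -- Since `0⁻¹ = 0`, `x⁻¹ * x` is the indicator of `x ≠ 0`.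
  refine ⟨cfc (fun x : ℝ => x⁻¹ * x) A, ?_, ?_, ?_,
    fun B hB => by rw [hfactor, mul_assoc, hB, mul_zero]⟩
  · rw [← nonneg_iff_posSemidef]
    exact cfc_nonneg fun x _ => by by_cases hx : x = 0 <;> simp [hx]
  · rw [← nonneg_iff_posSemidef, sub_nonneg]
    exact cfc_le_one _ _ fun x _ => by by_cases hx : x = 0 <;> simp [hx]
  · nth_rw 2 [← cfc_id' ℝ A]
    rw [← hmul]
    conv_rhs => rw [← cfc_id' ℝ A]
    exact cfc_congr fun x _ => by by_cases hx : x = 0 <;> simp [hx]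

end RCLike

theorem mul_trace_le_trace_of_smul_sub_eq_sub {m : Type*} [Fintype m] [DecidableEq m]
    {Mp Mm U V : Matrix m m ℝ} (hp : Mp.PosSemidef) (hortho : Mp * Mm = 0)
    (hU : U.PosSemidef) (hV : V.PosSemidef) {α : ℝ} (hUV : α • (Mp - Mm) = U - V) :
    α * Mp.trace ≤ U.trace := by
  obtain ⟨P, hP, hP', hPMp, hPMm⟩ := hp.isHermitian.exists_support_projection
  have hcompress : α • Mp = P * U - P * V := by
    rw [← mul_sub, ← hUV, Matrix.mul_smul, mul_sub, hPMp, hPMm _ hortho, sub_zero]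
  have hPU : (P * U).trace ≤ U.trace := by
    have := hP'.trace_mul_nonneg hU
    rwa [sub_mul, one_mul, trace_sub, sub_nonneg] at this
  have hPV : 0 ≤ (P * V).trace := hP.trace_mul_nonneg hV
  have := congrArg trace hcompress
  rw [trace_smul, trace_sub, smul_eq_mul] at this
  linarith

theorem stmt4_general {n : ℕ} (M Mp Mm : Matrix (Fin n) (Fin n) ℝ)
    (htr : 0 ≤ M.trace)
    (hp : Mp.PosSemidef) (hm : Mm.PosSemidef)
    (hdec : M = Mp - Mm) (hortho : Mp * Mm = 0)
    (hptr : 0 < Mp.trace) :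
    IsLeast {t : ℝ | ∃ (α : ℝ) (U V : Matrix (Fin n) (Fin n) ℝ),
        U.PosSemidef ∧ V.PosSemidef ∧ U.trace = 1 ∧ α • M = U - V ∧ t = V.trace}
      (Mm.trace / Mp.trace) := by
  subst hdec
  refine ⟨⟨(Mp.trace)⁻¹, (Mp.trace)⁻¹ • Mp, (Mp.trace)⁻¹ • Mm, hp.smul (by positivity),
    hm.smul (by positivity), ?_, smul_sub _ _ _, ?_⟩, ?_⟩
  · rw [trace_smul, smul_eq_mul, inv_mul_cancel₀ hptr.ne']
  · rw [trace_smul, smul_eq_mul, div_eq_inv_mul]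
  · rintro _ ⟨α, U, V, hU, hV, hUtr, hUV, rfl⟩
    have hαtp : α * Mp.trace ≤ 1 :=
      hUtr ▸ mul_trace_le_trace_of_smul_sub_eq_sub hp hortho hU hV hUV
    have hVtr : V.trace = 1 - α * (Mp.trace - Mm.trace) := by
      have := congrArg trace hUV
      rw [trace_smul, trace_sub, trace_sub, hUtr, smul_eq_mul] at this
      linarith
    rw [trace_sub] at htr
    rw [div_le_iff₀ hptr, hVtr]
    nlinarith [mul_nonneg (sub_nonneg.mpr hαtp) htr]

theorem stmt4 {n : ℕ} (M Mp Mm : Matrix (Fin n) (Fin n) ℝ)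
    (hM : M.IsSymm) (htr : 0 ≤ M.trace)
    (hp : Mp.PosSemidef) (hm : Mm.PosSemidef)
    (hdec : M = Mp - Mm) (hortho : Mp * Mm = 0)
    (hptr : 0 < Mp.trace) :
    IsLeast {t : ℝ | ∃ (α : ℝ) (U V : Matrix (Fin n) (Fin n) ℝ),
        U.PosSemidef ∧ V.PosSemidef ∧ U.trace = 1 ∧ α • M = U - V ∧ t = V.trace}
      (Mm.trace / Mp.trace) :=
  stmt4_general M Mp Mm htr hp hm hdec hortho hptr
end

section
/- Let x, z ∈ ℝⁿ be nonzero with x not parallel to z, and let e = xxᵀ − zzᵀ. Then the minimum of ‖xyᵀ + yxᵀ − e‖_F over y ∈ ℝⁿ equals ‖z‖² sin²φ, where φ is the angle between x and z (cos φ = xᵀz/(‖x‖‖z‖)). -/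
/-! Let `w` be the component of `z` orthogonal to `x`, so that `‖w‖² = ‖z‖² sin² φ`, and write
`z = α x + w`. The choice `y = ((1 - α²)/2) x - α w` makes the residual `x yᵀ + y xᵀ - e` equal to
`w wᵀ`, whose Frobenius norm is `‖w‖²`. Conversely, for every `y`, orthogonality of `w` and `x`
gives `wᵀ (x yᵀ + y xᵀ - e) w = (wᵀ z)² = ‖w‖⁴`, while Cauchy–Schwarz for the Frobenius inner
product bounds this quadratic form by `‖w‖² ‖x yᵀ + y xᵀ - e‖_F`. -/

/-- Frobenius norm of an n×n real matrix. -/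
noncomputable def frobNorm {n : ℕ} (M : Matrix (Fin n) (Fin n) ℝ) : ℝ :=
  Real.sqrt (∑ i, ∑ j, (M i j) ^ 2)

open Matrix InnerProductGeometry

theorem InnerProductGeometry.sq_norm_sub_starProjection_span_singleton {V : Type*}
    [NormedAddCommGroup V] [InnerProductSpace ℝ V] (x z : V) :
    ‖z - (ℝ ∙ x).starProjection z‖ ^ 2 = ‖z‖ ^ 2 * Real.sin (angle x z) ^ 2 := by
  rcases eq_or_ne x 0 with rfl | hx
  · simp [angle_zero_left]
  rcases eq_or_ne z 0 with rfl | hz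
  · simp
  have hx' : ‖x‖ ≠ 0 := norm_ne_zero_iff.2 hx
  have hz' : ‖z‖ ≠ 0 := norm_ne_zero_iff.2 hz
  rw [Submodule.starProjection_singleton, norm_sub_sq_real, inner_smul_right, norm_smul,
    real_inner_comm x z, Real.sin_sq, cos_angle]
  simp only [RCLike.ofReal_real_eq_id, id, Real.norm_eq_abs, mul_pow, sq_abs, div_pow]
  field_simp
  ring

theorem dotProduct_mulVec_eq_sum_vecMulVec_mul {ι R : Type*} [Fintype ι] [CommSemiring R]
    (w : ι → R) (M : Matrix ι ι R) :
    w ⬝ᵥ M *ᵥ w = ∑ i, ∑ j, vecMulVec w w i j * M i j := by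
  simp only [dotProduct, mulVec, vecMulVec_apply, Finset.mul_sum]
  exact Finset.sum_congr rfl fun i _ => Finset.sum_congr rfl fun j _ => by ring

section Frobenius

variable {n : ℕ}

theorem frobNorm_nonneg (M : Matrix (Fin n) (Fin n) ℝ) : 0 ≤ frobNorm M :=
  Real.sqrt_nonneg _

theorem frobNorm_vecMulVec_self (w : EuclideanSpace ℝ (Fin n)) :
    frobNorm (vecMulVec w.ofLp w.ofLp) = ‖w‖ ^ 2 := by
  have h : ∑ i, ∑ j, vecMulVec w.ofLp w.ofLp i j ^ 2 = (‖w‖ ^ 2) ^ 2 := by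
    simp only [vecMulVec_apply, mul_pow, ← Finset.sum_mul_sum, EuclideanSpace.real_norm_sq_eq]
    ring
  rw [frobNorm, h, Real.sqrt_sq (by positivity)]

theorem abs_sum_mul_le_frobNorm_mul (A M : Matrix (Fin n) (Fin n) ℝ) :
    |∑ i, ∑ j, A i j * M i j| ≤ frobNorm A * frobNorm M := by
  have h := Finset.sum_mul_sq_le_sq_mul_sq Finset.univ
    (fun p : Fin n × Fin n => A p.1 p.2) (fun p => M p.1 p.2)
  simp only [← Finset.univ_product_univ, Finset.sum_product] at h
  rw [frobNorm, frobNorm, ← Real.sqrt_mul (by positivity)]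
  exact Real.abs_le_sqrt h

theorem abs_dotProduct_mulVec_le (w : EuclideanSpace ℝ (Fin n)) (M : Matrix (Fin n) (Fin n) ℝ) :
    |w.ofLp ⬝ᵥ M *ᵥ w.ofLp| ≤ ‖w‖ ^ 2 * frobNorm M := by
  rw [dotProduct_mulVec_eq_sum_vecMulVec_mul, ← frobNorm_vecMulVec_self]
  exact abs_sum_mul_le_frobNorm_mul _ _

theorem sq_norm_le_frobNorm_of_dotProduct_mulVec_eq (w : EuclideanSpace ℝ (Fin n))
    (M : Matrix (Fin n) (Fin n) ℝ) (h : w.ofLp ⬝ᵥ M *ᵥ w.ofLp = (‖w‖ ^ 2) ^ 2) :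
    ‖w‖ ^ 2 ≤ frobNorm M := by
  rcases (sq_nonneg ‖w‖).eq_or_lt with hw | hw
  · rw [← hw]
    exact frobNorm_nonneg M
  · have hle := abs_dotProduct_mulVec_le w M
    rw [h, abs_of_nonneg (sq_nonneg _), sq (‖w‖ ^ 2)] at hle
    exact le_of_mul_le_mul_left hle hw

end Frobenius

section Residual

variable {ι : Type*}

def symmResidual (x y z : ι → ℝ) : Matrix ι ι ℝ :=
  vecMulVec x y + vecMulVec y x - (vecMulVec x x - vecMulVec z z)

theorem symmResidual_eq_vecMulVec_self (x w : ι → ℝ) (α : ℝ) :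
    symmResidual x (((1 - α ^ 2) / 2) • x - α • w) (α • x + w) = vecMulVec w w := by
  ext i j
  simp only [symmResidual, vecMulVec_apply, Matrix.add_apply, Matrix.sub_apply, Pi.add_apply,
    Pi.sub_apply, Pi.smul_apply, smul_eq_mul]
  ring

theorem dotProduct_symmResidual_mulVec [Fintype ι] (x y z w : ι → ℝ) (hxw : w ⬝ᵥ x = 0) :
    w ⬝ᵥ symmResidual x y z *ᵥ w = (w ⬝ᵥ z) ^ 2 := by
  simp only [symmResidual, add_mulVec, sub_mulVec, vecMulVec_mulVec, op_smul_eq_smul,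
    dotProduct_add, dotProduct_sub, dotProduct_smul, smul_eq_mul, hxw]
  rw [dotProduct_comm x w, dotProduct_comm z w, hxw]
  ring

end Residual

theorem stmt7_general {n : ℕ} (x z : EuclideanSpace ℝ (Fin n))
    (e : Matrix (Fin n) (Fin n) ℝ)
    (he : e = Matrix.of fun i j => x i * x j - z i * z j) :
    IsLeast {t : ℝ | ∃ y : EuclideanSpace ℝ (Fin n),
        t = frobNorm (Matrix.of (fun i j => x i * y j + y i * x j) - e)}
      (‖z‖ ^ 2 * Real.sin (InnerProductGeometry.angle x z) ^ 2) := by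
  set w := z - (ℝ ∙ x).starProjection z
  obtain ⟨α, hα⟩ := Submodule.mem_span_singleton.1 ((ℝ ∙ x).starProjection_apply_mem z)
  have hz : z.ofLp = α • x.ofLp + w.ofLp := by simp [w, ← hα]
  have hxw : w.ofLp ⬝ᵥ x.ofLp = 0 := Submodule.mem_orthogonal_singleton_iff_inner_right.1
    (Submodule.sub_starProjection_mem_orthogonal z)
  have hwz : w.ofLp ⬝ᵥ z.ofLp = ‖w‖ ^ 2 := by
    rw [hz, dotProduct_add, dotProduct_smul, hxw, smul_zero, zero_add,
      ← real_inner_self_eq_norm_sq]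
    rfl
  have hM : ∀ y : EuclideanSpace ℝ (Fin n),
      Matrix.of (fun i j => x i * y j + y i * x j) - e = symmResidual x.ofLp y.ofLp z.ofLp := by
    intro y
    ext i j
    simp only [he, symmResidual, vecMulVec_apply, Matrix.sub_apply, Matrix.add_apply, of_apply]
  rw [← sq_norm_sub_starProjection_span_singleton]
  refine ⟨⟨WithLp.toLp 2 (((1 - α ^ 2) / 2) • x.ofLp - α • w.ofLp), ?_⟩, ?_⟩
  · rw [hM, hz, symmResidual_eq_vecMulVec_self, frobNorm_vecMulVec_self]
  · rintro _ ⟨y, rfl⟩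
    rw [hM]
    apply sq_norm_le_frobNorm_of_dotProduct_mulVec_eq
    rw [dotProduct_symmResidual_mulVec _ _ _ _ hxw, hwz]

theorem stmt7 {n : ℕ} (x z : EuclideanSpace ℝ (Fin n))
    (hx : x ≠ 0) (hz : z ≠ 0) (hnp : ∀ c : ℝ, z ≠ c • x)
    (e : Matrix (Fin n) (Fin n) ℝ)
    (he : e = Matrix.of fun i j => x i * x j - z i * z j) :
    IsLeast {t : ℝ | ∃ y : EuclideanSpace ℝ (Fin n),
        t = frobNorm (Matrix.of (fun i j => x i * y j + y i * x j) - e)}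
      (‖z‖ ^ 2 * Real.sin (InnerProductGeometry.angle x z) ^ 2) :=
  stmt7_general x z e he
end
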